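/- Let T be a tubing of a finite connected simple graph Γ, let t ∈ T, and let S be a tubing of the reconnected complement Γ_t^* that is compatible with the induced tubing T_t^*. Then T ◇ S is a tubing of Γ, where T ◇ S consists of all sets s of vertices of Γ satisfying one of: (a) s ∈ T; (b) s ∈ S and, viewed in Γ, s is not linked to t; (c) s = s' ∪ t for some s' ∈ S that is linked to t in Γ (i.e., some vertex of s' is adjacent in Γ to some vertex of t). -/

import Mathlib

open scoped Classical
open TensorProduct

noncomputable section

/-- A finite simple graph whose vertices are a finite set of (totally ordered) naturals. -/
structure FinGraph : Type where
  verts : Finset ℕ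
  Adj : ℕ → ℕ → Prop
  symm : ∀ v w, Adj v w → Adj w v
  loopless : ∀ v, ¬ Adj v v
  support : ∀ v w, Adj v w → v ∈ verts ∧ w ∈ verts

namespace CDTub

/-- Connectivity of a vertex set within a graph: any two of its vertices are joined by a
walk staying inside the set. -/
def VConn (G : FinGraph) (s : Finset ℕ) : Prop :=
  ∀ v ∈ s, ∀ w ∈ s, Relation.ReflTransGen (fun a b => a ∈ s ∧ b ∈ s ∧ G.Adj a b) v w

/-- A tube: a nonempty set of vertices inducing a connected subgraph. -/
def IsTube (G : FinGraph) (t : Finset ℕ) : Prop :=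
  t.Nonempty ∧ t ⊆ G.verts ∧ VConn G t

/-- A connected (nonempty) graph: the universal tube is a tube. -/
def IsConnGraph (G : FinGraph) : Prop := IsTube G G.verts

/-- Two vertex sets are far apart: disjoint and with no edge between them. -/
def FarApart (G : FinGraph) (a b : Finset ℕ) : Prop :=
  Disjoint a b ∧ ¬ ∃ v ∈ a, ∃ w ∈ b, G.Adj v w

/-- Compatible tubes: nested or far apart. -/
def Compatible (G : FinGraph) (a b : Finset ℕ) : Prop :=
  a ⊆ b ∨ b ⊆ a ∨ FarApart G a b

/-- Linked tubes: disjoint and joined by an edge. -/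
def Linked (G : FinGraph) (a b : Finset ℕ) : Prop :=
  Disjoint a b ∧ ∃ v ∈ a, ∃ w ∈ b, G.Adj v w

/-- A tubing of a connected graph: pairwise compatible tubes containing the universal tube. -/
def IsTubing (G : FinGraph) (T : Finset (Finset ℕ)) : Prop :=
  G.verts ∈ T ∧ (∀ t ∈ T, IsTube G t) ∧
    ∀ t ∈ T, ∀ t' ∈ T, t ≠ t' → Compatible G t t'

/-- Induced subgraph on a set of vertices. -/
def induce (G : FinGraph) (t : Finset ℕ) : FinGraph where
  verts := t
  Adj v w := v ∈ t ∧ w ∈ t ∧ G.Adj v w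
  symm := fun v w h => ⟨h.2.1, h.1, G.symm v w h.2.2⟩
  loopless := fun v h => G.loopless v h.2.2
  support := fun _ _ h => ⟨h.1, h.2.1⟩

/-- Simultaneous reconnected complement with respect to a family `F` of tubes
(for a single tube, or a family of pairwise far apart tubes, this is the (iterated)
reconnected complement). -/
def reconnAll (G : FinGraph) (F : Finset (Finset ℕ)) : FinGraph where
  verts := G.verts \ F.biUnion id
  Adj v w := v ≠ w ∧ v ∈ G.verts \ F.biUnion id ∧ w ∈ G.verts \ F.biUnion id ∧
    (G.Adj v w ∨ ∃ f ∈ F, (∃ u ∈ f, G.Adj v u) ∧ ∃ u' ∈ f, G.Adj w u')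
  symm := by
    rintro v w ⟨hne, hv, hw, h⟩
    refine ⟨hne.symm, hw, hv, ?_⟩
    rcases h with h | ⟨f, hf, h1, h2⟩
    · exact Or.inl (G.symm _ _ h)
    · exact Or.inr ⟨f, hf, h2, h1⟩
  loopless := fun v h => h.1 rfl
  support := fun _ _ h => ⟨h.2.1, h.2.2.1⟩

/-- Reconnected complement `Γ_t^*` of a graph with respect to a tube. -/
def reconn (G : FinGraph) (t : Finset ℕ) : FinGraph := reconnAll G {t}

/-- The proper tubes of a tubing. -/
def properTubes (G : FinGraph) (T : Finset (Finset ℕ)) : Finset (Finset ℕ) :=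
  T.filter (fun s => s ≠ G.verts)

/-- The maximal proper tubes of a tubing. -/
def MaxtP (G : FinGraph) (T : Finset (Finset ℕ)) : Finset (Finset ℕ) :=
  (properTubes G T).filter (fun s => ∀ s' ∈ properTubes G T, s ⊆ s' → s = s')

/-- The iterated reconnected complement `Γ_T^*` with respect to the maximal proper tubes. -/
def gammaStar (G : FinGraph) (T : Finset (Finset ℕ)) : FinGraph :=
  reconnAll G (MaxtP G T)

/-- Restriction `T|_t` of a tubing to a tube. -/
def restrictT (T : Finset (Finset ℕ)) (t : Finset ℕ) : Finset (Finset ℕ) :=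
  T.filter (fun s => s ⊆ t)

/-- For a tube `s` of `Γ_T^*`, the tube `s̃` of `Γ`: the union of `s` with all maximal
proper tubes of `T` linked to `s`. -/
def tildeT (G : FinGraph) (T : Finset (Finset ℕ)) (s : Finset ℕ) : Finset ℕ :=
  s ∪ ((MaxtP G T).filter (fun m => Linked G m s)).biUnion id

/-- Substitution `T •_Γ S` of a tubing `S` of `Γ_T^*` into the tubing `T`. -/
def substT (G : FinGraph) (T S : Finset (Finset ℕ)) : Finset (Finset ℕ) :=
  T ∪ S.image (tildeT G T)

/-- The `t`-substitution `γ_t(T;S) = T ∪ (T|_t •_{Γ_t} S)`. -/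
def gammaSub (G : FinGraph) (T : Finset (Finset ℕ)) (t : Finset ℕ)
    (S : Finset (Finset ℕ)) : Finset (Finset ℕ) :=
  T ∪ substT (induce G t) (restrictT T t) S

/-- The tubing `T_t^*` induced on the reconnected complement `Γ_t^*`. -/
def indStar (T : Finset (Finset ℕ)) (t : Finset ℕ) : Finset (Finset ℕ) :=
  T.filter (fun s => Disjoint s t) ∪ (T.filter (fun s => t ⊂ s)).image (fun s => s \ t)

/-- The operation `T ◇ S` of Definition 2.4(2). -/
def diamond (G : FinGraph) (T : Finset (Finset ℕ)) (t : Finset ℕ)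
    (S : Finset (Finset ℕ)) : Finset (Finset ℕ) :=
  T ∪ S.filter (fun s => ¬ Linked G s t) ∪
    (S.filter (fun s => Linked G s t)).image (fun s => s ∪ t)

/-- The tubes of `T`, viewed as subsets of the subtype of vertices. -/
def tubeSets (G : FinGraph) (T : Finset (Finset ℕ)) : Set (Set {x // x ∈ G.verts}) :=
  {U | ∃ t ∈ T, U = {x : {x // x ∈ G.verts} | (x : ℕ) ∈ t}}

/-- The topology on the vertex set generated by the tubes of `T`. -/
def tubingTop (G : FinGraph) (T : Finset (Finset ℕ)) :
    TopologicalSpace {x // x ∈ G.verts} :=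
  TopologicalSpace.generateFrom (tubeSets G T)

/-- One-line notation of the permutation `σ_t`: the vertices of `t` in increasing order
followed by the remaining vertices in increasing order. -/
def sigmaList (X t : Finset ℕ) : List ℕ :=
  t.sort (· ≤ ·) ++ (X \ t).sort (· ≤ ·)

/-- Number of `Γ`-inversions of a permutation given by its one-line notation `l`:
pairs of positions `p < q` carrying values `a > b` which form an edge of `Γ`. -/
def invCount (G : FinGraph) (l : List ℕ) : ℕ :=
  ((Finset.range l.length ×ˢ Finset.range l.length).filter
    (fun pq => pq.1 < pq.2 ∧ l.getD pq.2 0 < l.getD pq.1 0 ∧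
      G.Adj (l.getD pq.1 0) (l.getD pq.2 0))).card

/-- The signature `sgn^Γ(σ) = (-1)^{inv_Γ(σ)}`. -/
def graphSgn (G : FinGraph) (l : List ℕ) : ℤ := (-1) ^ invCount G l

/-- Rank (1-based) of `v` inside a finite set `X` of naturals: the order-preserving
relabelling of `X` by `{1,…,|X|}`. -/
def rk (X : Finset ℕ) (v : ℕ) : ℕ := (X.filter (fun u => u ≤ v)).card

/-- Order-preserving relabelling of a graph by the initial segment `{1,…,n}`. -/
def relabelG (G : FinGraph) : FinGraph where
  verts := G.verts.image (rk G.verts)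
  Adj i j := i ≠ j ∧ ∃ v w, G.Adj v w ∧ i = rk G.verts v ∧ j = rk G.verts w
  symm := by
    rintro i j ⟨hne, v, w, h, hi, hj⟩
    exact ⟨hne.symm, w, v, G.symm _ _ h, hj, hi⟩
  loopless := fun _ h => h.1 rfl
  support := by
    rintro i j ⟨hne, v, w, h, hi, hj⟩
    exact ⟨Finset.mem_image.mpr ⟨v, (G.support _ _ h).1, hi.symm⟩,
      Finset.mem_image.mpr ⟨w, (G.support _ _ h).2, hj.symm⟩⟩

/-- Order-preserving relabelling of a subset of `X`. -/
def relabelF (X t : Finset ℕ) : Finset ℕ := t.image (rk X)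

/-- Order-preserving relabelling of a family of subsets of `X`. -/
def relabelT (X : Finset ℕ) (T : Finset (Finset ℕ)) : Finset (Finset ℕ) :=
  T.image (relabelF X)

/-- Connected components (in `G`) of a set of vertices. -/
def comps (G : FinGraph) (s : Finset ℕ) : Finset (Finset ℕ) :=
  s.image (fun v => s.filter (fun w =>
    Relation.ReflTransGen (fun a b => a ∈ s ∧ b ∈ s ∧ G.Adj a b) v w))

/-- The restriction map `res_Ω^Γ` on tubings: replace each tube by its connected
components in `Ω`. -/
def resT (Om : FinGraph) (T : Finset (Finset ℕ)) : Finset (Finset ℕ) :=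
  T.biUnion (comps Om)

/-- Shift of a vertex set by `n`. -/
def shiftF (n : ℕ) (s : Finset ℕ) : Finset ℕ := s.image (fun v => v + n)

/-- Shift of a family of vertex sets by `n`. -/
def shiftT (n : ℕ) (S : Finset (Finset ℕ)) : Finset (Finset ℕ) := S.image (shiftF n)

/-- Shift of a graph by `n`. -/
def shiftG (n : ℕ) (G : FinGraph) : FinGraph where
  verts := shiftF n G.verts
  Adj v w := ∃ a b, G.Adj a b ∧ v = a + n ∧ w = b + n
  symm := by
    rintro v w ⟨a, b, h, rfl, rfl⟩
    exact ⟨b, a, G.symm _ _ h, rfl, rfl⟩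
  loopless := by
    rintro v ⟨a, b, h, ha, hb⟩
    have : a = b := by omega
    exact G.loopless b (this ▸ h)
  support := by
    rintro v w ⟨a, b, h, rfl, rfl⟩
    exact ⟨Finset.mem_image.mpr ⟨a, (G.support _ _ h).1, rfl⟩,
      Finset.mem_image.mpr ⟨b, (G.support _ _ h).2, rfl⟩⟩

/-- `X_T` : the vertices belonging to no proper tube of `T`. -/
def freeVerts (G : FinGraph) (T : Finset (Finset ℕ)) : Finset ℕ :=
  G.verts.filter (fun v => ∀ s ∈ T, s ≠ G.verts → v ∉ s)

/-- The endpoint `max X_T` of the joining edge. -/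
def joinA (G : FinGraph) (T : Finset (Finset ℕ)) : ℕ :=
  WithBot.unbotD 0 (freeVerts G T).max

/-- The endpoint `n + min X_S` of the joining edge. -/
def joinB (Om : FinGraph) (S : Finset (Finset ℕ)) (n : ℕ) : ℕ :=
  n + WithTop.untopD 0 (freeVerts Om S).min

/-- Vertex set of the joined graph `Γ ∪_{T,S} Ω`. -/
def joinVerts (G Om : FinGraph) (n : ℕ) : Finset ℕ := G.verts ∪ shiftF n Om.verts

/-- The joined graph `Γ ∪_{T,S} Ω`: the disjoint union (with `Ω` shifted by `n`)
plus one edge from `max X_T` to `n + min X_S`. -/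
def joinG (G Om : FinGraph) (T S : Finset (Finset ℕ)) (n : ℕ) : FinGraph where
  verts := joinVerts G Om n
  Adj v w := G.Adj v w ∨ (shiftG n Om).Adj v w ∨
    (v ≠ w ∧ v ∈ joinVerts G Om n ∧ w ∈ joinVerts G Om n ∧
      ((v = joinA G T ∧ w = joinB Om S n) ∨ (w = joinA G T ∧ v = joinB Om S n)))
  symm := by
    rintro v w (h | h | ⟨hne, hv, hw, hc⟩)
    · exact Or.inl (G.symm _ _ h)
    · exact Or.inr (Or.inl ((shiftG n Om).symm _ _ h))
    · exact Or.inr (Or.inr ⟨hne.symm, hw, hv, hc.symm⟩)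
  loopless := by
    rintro v (h | h | ⟨hne, _⟩)
    · exact G.loopless v h
    · exact (shiftG n Om).loopless v h
    · exact hne rfl
  support := by
    rintro v w (h | h | ⟨_, hv, hw, _⟩)
    · exact ⟨Finset.mem_union_left _ (G.support _ _ h).1,
        Finset.mem_union_left _ (G.support _ _ h).2⟩
    · exact ⟨Finset.mem_union_right _ ((shiftG n Om).support _ _ h).1,
        Finset.mem_union_right _ ((shiftG n Om).support _ _ h).2⟩
    · exact ⟨hv, hw⟩

/-- `T ▷ S`. -/
def trR (G Om : FinGraph) (T S : Finset (Finset ℕ)) (n : ℕ) : Finset (Finset ℕ) :=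
  T ∪ shiftT n (properTubes Om S) ∪ {joinVerts G Om n}

/-- `T ◁ S`. -/
def trL (G Om : FinGraph) (T S : Finset (Finset ℕ)) (n : ℕ) : Finset (Finset ℕ) :=
  properTubes G T ∪ shiftT n S ∪ {joinVerts G Om n}

/-- `T ⊥ S`. -/
def tPerp (G Om : FinGraph) (T S : Finset (Finset ℕ)) (n : ℕ) : Finset (Finset ℕ) :=
  properTubes G T ∪ shiftT n (properTubes Om S) ∪ {joinVerts G Om n}

/-- Equality of graphs: same vertex set and same edges. -/
def GEq (A B : FinGraph) : Prop :=
  A.verts = B.verts ∧ ∀ v w, A.Adj v w ↔ B.Adj v w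

/-- Index type for the basis of `Tub⁺`: `none` is the unit `1`, `some (Γ,T)` is a pair. -/
abbrev TubIdx : Type := Option (FinGraph × Finset (Finset ℕ))

/-- A pair `(Γ,T)` relabelled order-preservingly to standard vertex set, identified
with the unit `1` when the vertex set is empty. -/
def embPair (G : FinGraph) (T : Finset (Finset ℕ)) : TubIdx :=
  if G.verts = ∅ then none else some (relabelG G, relabelT G.verts T)

/-- The value of the pre-Lie coproduct `Δ_•` on a basis element. -/
def deltaFun (K : Type) [CommRing K] (i : TubIdx) :
    (TubIdx →₀ K) ⊗[K] (TubIdx →₀ K) :=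
  match i with
  | none => Finsupp.single (none : TubIdx) (1 : K) ⊗ₜ[K] Finsupp.single (none : TubIdx) (1 : K)
  | some (G, T) =>
      (∑ t ∈ T, (Finsupp.single (embPair (induce G t) (restrictT T t)) (1 : K)) ⊗ₜ[K]
        (Finsupp.single (embPair (reconn G t) (indStar T t)) (1 : K)))
      + (Finsupp.single (none : TubIdx) (1 : K)) ⊗ₜ[K]
          (Finsupp.single (some (G, T) : TubIdx) (1 : K))

/-- The pre-Lie coproduct `Δ_•` on `Tub⁺`, the free module on `TubIdx`. -/
def delta (K : Type) [CommRing K] :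
    (TubIdx →₀ K) →ₗ[K] (TubIdx →₀ K) ⊗[K] (TubIdx →₀ K) :=
  Finsupp.lift ((TubIdx →₀ K) ⊗[K] (TubIdx →₀ K)) K TubIdx (deltaFun K)

end CDTub

/-!
Lift a tube `s` of `Γ_t^*` to the tube `s̃` of `Γ` obtained by adding `t` when `s` is linked
to `t`. Lifting preserves tubes, and it turns compatible tubes of `Γ_t^*` into compatible tubes
of `Γ`: nesting is kept, and two far apart tubes of `Γ_t^*` cannot both be linked to `t`.
A tube of `T` either lies inside `t` or is the lift of a tube of `T_t^*` (its trace outside `t`),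
and the tubes of `T ◇ S` coming from `S` are exactly the lifts of the tubes of `S`. Hence
`T ◇ S` consists of tubes of `T` inside `t` and lifts of tubes of the tubing `T_t^* ∪ S`; tubes
inside `t` are compatible with every lift, since a lift either contains `t` or is far from it.
-/

namespace CDTub

section Compatibility

variable {G : FinGraph} {a b c : Finset ℕ}

theorem FarApart.symm (h : FarApart G a b) : FarApart G b a :=
  ⟨h.1.symm, fun ⟨v, hv, w, hw, hvw⟩ => h.2 ⟨w, hw, v, hv, G.symm _ _ hvw⟩⟩

theorem FarApart.mono_left (h : FarApart G a c) (hba : b ⊆ a) : FarApart G b c :=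
  ⟨h.1.mono_left hba, fun ⟨v, hv, w, hw, hvw⟩ => h.2 ⟨v, hba hv, w, hw, hvw⟩⟩

theorem FarApart.union_left (ha : FarApart G a c) (hb : FarApart G b c) :
    FarApart G (a ∪ b) c := by
  refine ⟨Finset.disjoint_union_left.mpr ⟨ha.1, hb.1⟩, ?_⟩
  rintro ⟨v, hv, w, hw, hvw⟩
  rcases Finset.mem_union.mp hv with hv | hv
  exacts [ha.2 ⟨v, hv, w, hw, hvw⟩, hb.2 ⟨v, hv, w, hw, hvw⟩]

theorem Compatible.symm (h : Compatible G a b) : Compatible G b a := by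
  rcases h with h | h | h
  exacts [Or.inr (Or.inl h), Or.inl h, Or.inr (Or.inr h.symm)]

theorem farApart_of_disjoint_of_not_linked (hd : Disjoint a b) (h : ¬ Linked G a b) :
    FarApart G a b :=
  ⟨hd, fun he => h ⟨hd, he⟩⟩

theorem IsTubing.compatible {T : Finset (Finset ℕ)} (hT : IsTubing G T) (ha : a ∈ T)
    (hb : b ∈ T) : Compatible G a b := by
  by_cases hab : a = b
  · exact Or.inl hab.le
  · exact hT.2.2 a ha b hb hab

end Compatibility

section ReconnectedComplement

variable {G : FinGraph} {t s p q : Finset ℕ}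

theorem reconn_adj {v w : ℕ} :
    (reconn G t).Adj v w ↔ v ≠ w ∧ v ∈ G.verts \ t ∧ w ∈ G.verts \ t ∧
      (G.Adj v w ∨ (∃ u ∈ t, G.Adj v u) ∧ ∃ u' ∈ t, G.Adj w u') := by
  simp only [reconn, reconnAll, Finset.singleton_biUnion, id, Finset.mem_singleton,
    exists_eq_left]

theorem reconn_verts : (reconn G t).verts = G.verts \ t := by
  simp [reconn, reconnAll]

theorem IsTube.disjoint_of_reconn (hs : IsTube (reconn G t) s) : Disjoint s t :=
  Finset.disjoint_left.mpr fun _ hv => (Finset.mem_sdiff.mp (reconn_verts ▸ hs.2.1 hv)).2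

theorem reconn_adj_of_adj {v w : ℕ} (hvw : G.Adj v w) (hv : v ∉ t) (hw : w ∉ t) :
    (reconn G t).Adj v w := by
  obtain ⟨hvG, hwG⟩ := G.support v w hvw
  exact reconn_adj.mpr ⟨fun h => G.loopless v (h ▸ hvw), Finset.mem_sdiff.mpr ⟨hvG, hv⟩,
    Finset.mem_sdiff.mpr ⟨hwG, hw⟩, Or.inl hvw⟩

theorem FarApart.of_reconn (hp : Disjoint p t) (hq : Disjoint q t)
    (h : FarApart (reconn G t) p q) : FarApart G p q :=
  ⟨h.1, fun ⟨v, hv, w, hw, hvw⟩ => h.2 ⟨v, hv, w, hw, reconn_adj_of_adj hvw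
    (Finset.disjoint_left.mp hp hv) (Finset.disjoint_left.mp hq hw)⟩⟩

theorem not_farApart_reconn_of_linked (hp : Linked G p t) (hq : Linked G q t) :
    ¬ FarApart (reconn G t) p q := by
  obtain ⟨hpt, v, hv, u, hu, hvu⟩ := hp
  obtain ⟨hqt, w, hw, u', hu', hwu'⟩ := hq
  rintro ⟨hpq, hne⟩
  refine hne ⟨v, hv, w, hw,
    reconn_adj.mpr ⟨?_, ?_, ?_, Or.inr ⟨⟨u, hu, hvu⟩, u', hu', hwu'⟩⟩⟩
  · rintro rfl
    exact Finset.disjoint_left.mp hpq hv hw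
  · exact Finset.mem_sdiff.mpr ⟨(G.support _ _ hvu).1, Finset.disjoint_left.mp hpt hv⟩
  · exact Finset.mem_sdiff.mpr ⟨(G.support _ _ hwu').1, Finset.disjoint_left.mp hqt hw⟩

end ReconnectedComplement

section Tubes

variable {G : FinGraph} {t s a : Finset ℕ}

/-- `VConn G s` unfolds to reachability under `StepIn G s`. -/
def StepIn (G : FinGraph) (s : Finset ℕ) (a b : ℕ) : Prop := a ∈ s ∧ b ∈ s ∧ G.Adj a b

instance : Std.Symm (StepIn G s) := ⟨fun _ _ h => ⟨h.2.1, h.1, G.symm _ _ h.2.2⟩⟩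

theorem StepIn.mono {s' : Finset ℕ} (h : s ⊆ s') {a b : ℕ} (hab : StepIn G s a b) :
    StepIn G s' a b :=
  ⟨h hab.1, h hab.2.1, hab.2.2⟩

theorem vConn_of_reachable {u : ℕ}
    (h : ∀ v ∈ s, Relation.ReflTransGen (StepIn G s) u v) : VConn G s := fun v hv w hw =>
  (symm (h v hv)).trans (h w hw)

/-- A walk in `a` from a vertex of `t` to a vertex outside `t` crosses an edge leaving `t`. -/
theorem linked_sdiff_of_ssubset (ht : t.Nonempty) (ha : VConn G a) (hta : t ⊂ a) :
    Linked G (a \ t) t := by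
  refine ⟨Finset.sdiff_disjoint, ?_⟩
  obtain ⟨u, hu⟩ := ht
  obtain ⟨w, hwa, hwt⟩ := Finset.exists_of_ssubset hta
  have hcross : ∀ x, Relation.ReflTransGen (StepIn G a) u x → x ∉ t →
      ∃ v ∈ a \ t, ∃ u' ∈ t, G.Adj v u' := by
    intro x hx
    induction hx with
    | refl => exact fun h => absurd hu h
    | @tail b c _ hbc ih =>
      intro hc
      by_cases hb : b ∈ t
      · exact ⟨c, Finset.mem_sdiff.mpr ⟨hbc.2.1, hc⟩, b, hb, G.symm _ _ hbc.2.2⟩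
      · exact ih hb
  exact hcross w (ha u (hta.1 hu) w hwa) hwt

theorem IsTube.of_reconn_of_not_linked (hs : IsTube (reconn G t) s) (hst : ¬ Linked G s t) :
    IsTube G s := by
  have hsub : s ⊆ G.verts \ t := reconn_verts (G := G) ▸ hs.2.1
  refine ⟨hs.1, hsub.trans Finset.sdiff_subset, fun v hv w hw => ?_⟩
  refine Relation.ReflTransGen.mono (fun a b ⟨ha, hb, hab⟩ => ⟨ha, hb, ?_⟩) _ _
    (hs.2.2 v hv w hw)
  rcases (reconn_adj.mp hab).2.2.2 with hab | ⟨⟨u, hu, hau⟩, -⟩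
  · exact hab
  · exact absurd ⟨hs.disjoint_of_reconn, a, ha, u, hu, hau⟩ hst

/-- A step of `Γ_t^*` inside `s` is either an edge of `Γ` or a detour through the tube `t`. -/
theorem IsTube.union_of_reconn_of_linked (ht : IsTube G t) (hs : IsTube (reconn G t) s)
    (hst : Linked G s t) : IsTube G (s ∪ t) := by
  obtain ⟨-, w₀, hw₀, u₀, hu₀, hw₀u₀⟩ := hst
  have hsub : s ⊆ G.verts \ t := reconn_verts (G := G) ▸ hs.2.1
  have walk_t : ∀ u ∈ t, ∀ u' ∈ t, Relation.ReflTransGen (StepIn G (s ∪ t)) u u' :=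
    fun u hu u' hu' => Relation.ReflTransGen.mono
      (fun _ _ => StepIn.mono Finset.subset_union_right) _ _ (ht.2.2 u hu u' hu')
  have step_s : StepIn (reconn G t) s ≤ Relation.ReflTransGen (StepIn G (s ∪ t)) := by
    rintro a b ⟨ha, hb, hab⟩
    rcases (reconn_adj.mp hab).2.2.2 with hab | ⟨⟨u, hu, hau⟩, u', hu', hbu'⟩
    · exact .single ⟨Finset.mem_union_left _ ha, Finset.mem_union_left _ hb, hab⟩
    · exact (Relation.ReflTransGen.single
        ⟨Finset.mem_union_left _ ha, Finset.mem_union_right _ hu, hau⟩).trans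
        ((walk_t u hu u' hu').tail
          ⟨Finset.mem_union_right _ hu', Finset.mem_union_left _ hb, G.symm _ _ hbu'⟩)
  refine ⟨⟨u₀, Finset.mem_union_right _ hu₀⟩,
    Finset.union_subset (hsub.trans Finset.sdiff_subset) ht.2.1,
    vConn_of_reachable (u := u₀) ?_⟩
  intro v hv
  rcases Finset.mem_union.mp hv with hv | hv
  · exact (Relation.ReflTransGen.single (symm
      ⟨Finset.mem_union_left _ hw₀, Finset.mem_union_right _ hu₀, hw₀u₀⟩)).trans
      (Relation.reflTransGen_closed step_s _ _ (hs.2.2 w₀ hw₀ v hv))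
  · exact walk_t u₀ hu₀ v hv

end Tubes

def reconnLift (G : FinGraph) (t s : Finset ℕ) : Finset ℕ :=
  if Linked G s t then s ∪ t else s

section Lift

variable {G : FinGraph} {t p q : Finset ℕ}

theorem subset_reconnLift : p ⊆ reconnLift G t p := by
  unfold reconnLift
  split_ifs
  exacts [Finset.subset_union_left, le_rfl]

theorem IsTube.reconnLift (ht : IsTube G t) (hp : IsTube (reconn G t) p) :
    IsTube G (reconnLift G t p) := by
  unfold CDTub.reconnLift
  split_ifs with hpt
  exacts [ht.union_of_reconn_of_linked hp hpt, hp.of_reconn_of_not_linked hpt]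

theorem reconnLift_mono (hq : Disjoint q t) (hpq : p ⊆ q) :
    reconnLift G t p ⊆ reconnLift G t q := by
  by_cases hpt : Linked G p t
  · have hqt : Linked G q t :=
      let ⟨_, v, hv, u, hu, hvu⟩ := hpt
      ⟨hq, v, hpq hv, u, hu, hvu⟩
    simp only [reconnLift, if_pos hpt, if_pos hqt]
    exact Finset.union_subset_union hpq le_rfl
  · simp only [reconnLift, if_neg hpt]
    exact hpq.trans subset_reconnLift

theorem FarApart.reconnLift_left (hpq : FarApart G p q) (hq : Disjoint q t)
    (hqt : ¬ Linked G q t) : FarApart G (reconnLift G t p) q := by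
  unfold reconnLift
  split_ifs
  exacts [hpq.union_left (farApart_of_disjoint_of_not_linked hq hqt).symm, hpq]

theorem Compatible.reconnLift (hp : Disjoint p t) (hq : Disjoint q t)
    (hpq : Compatible (reconn G t) p q) :
    Compatible G (CDTub.reconnLift G t p) (CDTub.reconnLift G t q) := by
  rcases hpq with hpq | hqp | hfar
  · exact Or.inl (reconnLift_mono hq hpq)
  · exact Or.inr (Or.inl (reconnLift_mono hp hqp))
  have hfar' := hfar.of_reconn hp hq
  by_cases hpt : Linked G p t
  · by_cases hqt : Linked G q t
    · exact absurd hfar (not_farApart_reconn_of_linked hpt hqt)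
    · simp only [CDTub.reconnLift, if_neg hqt]
      exact Or.inr (Or.inr (hfar'.reconnLift_left hq hqt))
  · simp only [CDTub.reconnLift, if_neg hpt]
    exact Or.inr (Or.inr (hfar'.symm.reconnLift_left hp hpt).symm)

theorem compatible_reconnLift_of_subset {a : Finset ℕ} (hat : a ⊆ t) (hp : Disjoint p t) :
    Compatible G a (reconnLift G t p) := by
  unfold reconnLift
  split_ifs with hpt
  · exact Or.inl (hat.trans Finset.subset_union_right)
  · exact Or.inr (Or.inr ((farApart_of_disjoint_of_not_linked hp hpt).symm.mono_left hat))

end Lift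

theorem IsTubing.subset_or_eq_reconnLift {G : FinGraph} {T : Finset (Finset ℕ)}
    {t a : Finset ℕ} (hT : IsTubing G T) (ht : t ∈ T) (ha : a ∈ T) :
    a ⊆ t ∨ ∃ u ∈ indStar T t, reconnLift G t u = a := by
  rcases hT.compatible ha ht with hat | hta | hfar
  · exact Or.inl hat
  · by_cases hat : a ⊆ t
    · exact Or.inl hat
    have hssub : t ⊂ a := Finset.ssubset_iff_subset_ne.mpr ⟨hta, fun h => hat h.ge⟩
    refine Or.inr ⟨a \ t, Finset.mem_union_right _ (Finset.mem_image_of_mem _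
      (Finset.mem_filter.mpr ⟨ha, hssub⟩)), ?_⟩
    rw [reconnLift, if_pos (linked_sdiff_of_ssubset (hT.2.1 t ht).1 (hT.2.1 a ha).2.2 hssub),
      Finset.sdiff_union_of_subset hta]
  · refine Or.inr ⟨a, Finset.mem_union_left _ (Finset.mem_filter.mpr ⟨ha, hfar.1⟩), ?_⟩
    rw [reconnLift, if_neg fun h => hfar.2 h.2]

theorem mem_diamond {G : FinGraph} {T S : Finset (Finset ℕ)} {t x : Finset ℕ}
    (hx : x ∈ diamond G T t S) : x ∈ T ∨ ∃ s ∈ S, reconnLift G t s = x := by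
  simp only [diamond, Finset.mem_union, Finset.mem_filter, Finset.mem_image] at hx
  rcases hx with (hxT | ⟨hxS, hxt⟩) | ⟨s, ⟨hsS, hst⟩, rfl⟩
  · exact Or.inl hxT
  · exact Or.inr ⟨x, hxS, if_neg hxt⟩
  · exact Or.inr ⟨s, hsS, if_pos hst⟩

end CDTub

open CDTub in
theorem diamond_is_tubing_general (G : FinGraph)
    (T : Finset (Finset ℕ)) (hT : IsTubing G T) (t : Finset ℕ) (ht : t ∈ T)
    (S : Finset (Finset ℕ))
    (hcomp : IsTubing (reconn G t) (indStar T t ∪ S)) :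
    IsTubing G (diamond G T t S) := by
  have hU : ∀ u ∈ indStar T t ∪ S, IsTube (reconn G t) u := hcomp.2.1
  have hcases : ∀ x ∈ diamond G T t S,
      (x ∈ T ∧ x ⊆ t) ∨ ∃ u ∈ indStar T t ∪ S, reconnLift G t u = x := by
    intro x hx
    rcases mem_diamond hx with hxT | ⟨s, hs, rfl⟩
    · rcases hT.subset_or_eq_reconnLift ht hxT with hxt | ⟨u, hu, rfl⟩
      exacts [Or.inl ⟨hxT, hxt⟩, Or.inr ⟨u, Finset.mem_union_left _ hu, rfl⟩]
    · exact Or.inr ⟨s, Finset.mem_union_right _ hs, rfl⟩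
  refine ⟨Finset.mem_union_left _ (Finset.mem_union_left _ hT.1), fun x hx => ?_,
    fun x hx y hy _ => ?_⟩
  · rcases hcases x hx with ⟨hxT, -⟩ | ⟨u, hu, rfl⟩
    exacts [hT.2.1 x hxT, (hT.2.1 t ht).reconnLift (hU u hu)]
  · rcases hcases x hx with ⟨hxT, hxt⟩ | ⟨u, hu, rfl⟩ <;>
      rcases hcases y hy with ⟨hyT, hyt⟩ | ⟨v, hv, rfl⟩
    · exact hT.compatible hxT hyT
    · exact compatible_reconnLift_of_subset hxt (hU v hv).disjoint_of_reconn
    · exact (compatible_reconnLift_of_subset hyt (hU u hu).disjoint_of_reconn).symm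
    · exact (hcomp.compatible hu hv).reconnLift (hU u hu).disjoint_of_reconn
        (hU v hv).disjoint_of_reconn

open CDTub in
/-- If `S` is a tubing of the reconnected complement `Γ_t^*` compatible with the induced
tubing `T_t^*`, then `T ◇ S` is a tubing of `Γ`. -/
theorem diamond_is_tubing (G : FinGraph) (hc : IsConnGraph G)
    (T : Finset (Finset ℕ)) (hT : IsTubing G T) (t : Finset ℕ) (ht : t ∈ T)
    (S : Finset (Finset ℕ)) (hS : IsTubing (reconn G t) S)
    (hcomp : IsTubing (reconn G t) (indStar T t ∪ S)) :
    IsTubing G (diamond G T t S) :=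
  diamond_is_tubing_general G T hT t ht S hcomp
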